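/- (Joint entropy theorem.) Let p : Fin c → ℝ be a probability vector (p_i ≥ 0, ∑ p_i = 1) and for each i let σ_i be a density matrix on Fin n. Let Ω be the block-diagonal matrix on (Fin c) × (Fin n) whose entry at ((i,a),(j,b)) is p_i·(σ_i)_{ab} if i = j and 0 otherwise. Then Ω is a density matrix and S(Ω) = H(p) + ∑_i p_i · S(σ_i), where H(p) = ∑_i η(p_i) is the Shannon entropy of p. -/

import Mathlib

open Matrix Kronecker BigOperators ComplexOrder

/-- η(x) = −x·log x -/
noncomputable def entEta (x : ℝ) : ℝ := -x * Real.log x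

/-- von Neumann entropy S(ρ) = ∑ η(λ_i(ρ)) using the eigenvalues from the
spectral theorem for Hermitian matrices. -/
noncomputable def vnEntropy {n : Type*} [Fintype n] [DecidableEq n] (ρ : Matrix n n ℂ) : ℝ :=
  if h : ρ.IsHermitian then ∑ i, entEta (h.eigenvalues i) else 0

/-- A density matrix: Hermitian, positive semidefinite, trace one. -/
def IsDensityMatrix {n : Type*} [Fintype n] [DecidableEq n] (ρ : Matrix n n ℂ) : Prop :=
  ρ.IsHermitian ∧ ρ.PosSemidef ∧ ρ.trace = 1

/-- Pinching of a matrix by a function `f` on the index set. -/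
def pinch {I : Type*} {α : Type*} [DecidableEq α] (f : I → α) (M : Matrix I I ℂ) :
    Matrix I I ℂ :=
  Matrix.of fun i j => if f i = f j then M i j else 0

/-- Relative entropy of asymmetry A(ρ) = S(P_f ρ) − S(ρ). -/
noncomputable def asym {I : Type*} [Fintype I] [DecidableEq I] {α : Type*} [DecidableEq α]
    (f : I → α) (ρ : Matrix I I ℂ) : ℝ :=
  vnEntropy (pinch f ρ) - vnEntropy ρ

/-- Energy function of the global dephasing Π. -/
def globalE {s r : ℕ} (ES : Fin s → ℤ) (ER : Fin r → ℤ) : Fin s × Fin r → ℤ :=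
  fun p => ES p.1 + ER p.2

/-- Energy function of the local dephasing Δ. -/
def localE {s r : ℕ} (ES : Fin s → ℤ) (ER : Fin r → ℤ) : Fin s × Fin r → ℤ × ℤ :=
  fun p => (ES p.1, ER p.2)

/-!
Up to reordering the index pairs, `Ω` is the block-diagonal matrix with blocks `p i • σ i`.
Von Neumann entropy only depends on the multiset of roots of the characteristic polynomial,
so it is invariant under reindexing and additive over diagonal blocks, since the
characteristic polynomial of a block-diagonal matrix is the product of those of its blocks.
The eigenvalues of `p i • σ i` are the `p i * λ`, with `λ` running over the eigenvalues of
`σ i`, and `η (p λ) = p η(λ) + λ η(p)`; summing over `λ`, using `∑ λ = tr σ i = 1`, gives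
`η (p i) + p i * S (σ i)`.
-/

open Polynomial

namespace Matrix

variable {n o R : Type*} [Fintype n] [DecidableEq n] [Fintype o] [DecidableEq o]

lemma charmatrix_blockDiagonal [CommRing R] (A : o → Matrix n n R) :
    charmatrix (blockDiagonal A) = blockDiagonal fun i => charmatrix (A i) := by
  ext ⟨a, i⟩ ⟨b, j⟩
  by_cases hij : i = j <;> by_cases hab : a = b <;> simp [blockDiagonal_apply, *]

lemma charpoly_blockDiagonal [CommRing R] (A : o → Matrix n n R) :
    (blockDiagonal A).charpoly = ∏ i, (A i).charpoly := by
  rw [charpoly, charmatrix_blockDiagonal, det_blockDiagonal]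
  rfl

lemma charpoly_conjStarAlgAut [CommRing R] [StarRing R] (U : unitary (Matrix n n R))
    (A : Matrix n n R) : (Unitary.conjStarAlgAut R _ U A).charpoly = A.charpoly := by
  rw [Unitary.conjStarAlgAut_apply, charpoly_mul_comm, ← mul_assoc]
  simp

open scoped MatrixOrder in
lemma PosSemidef.blockDiagonal {𝕜 : Type*} [RCLike 𝕜] {A : o → Matrix n n 𝕜}
    (hA : ∀ i, (A i).PosSemidef) : (blockDiagonal A).PosSemidef := by
  choose B hB using fun i => CStarAlgebra.nonneg_iff_eq_star_mul_self.mp (hA i).nonneg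
  rw [funext hB]
  simpa [star_eq_conjTranspose, blockDiagonal_mul, blockDiagonal_conjTranspose] using
    posSemidef_conjTranspose_mul_self (Matrix.blockDiagonal B)

namespace IsHermitian

variable {A : Matrix n n ℂ}

lemma sum_comp_eigenvalues_eq_roots_charpoly (hA : A.IsHermitian) (f : ℝ → ℝ) :
    ∑ i, f (hA.eigenvalues i) = ((A.charpoly.roots.map Complex.re).map f).sum := by
  simp [hA.roots_charpoly_eq_eigenvalues, Multiset.map_map]

lemma sum_comp_eigenvalues_of_charpoly_eq (hA : A.IsHermitian) {ι : Type*} [Fintype ι]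
    {d : ι → ℝ} (h : A.charpoly = ∏ i, (X - C (d i : ℂ))) (f : ℝ → ℝ) :
    ∑ i, f (hA.eigenvalues i) = ∑ i, f (d i) := by
  rw [hA.sum_comp_eigenvalues_eq_roots_charpoly, h,
    roots_prod _ _ (Finset.prod_ne_zero_iff.mpr fun i _ => X_sub_C_ne_zero _)]
  simp only [roots_X_sub_C]
  simp

lemma charpoly_ofReal_smul (hA : A.IsHermitian) (t : ℝ) :
    ((t : ℂ) • A).charpoly = ∏ i, (X - C ((t * hA.eigenvalues i : ℝ) : ℂ)) := by
  conv_lhs => rw [hA.spectral_theorem, ← map_smul, charpoly_conjStarAlgAut]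
  rw [← diagonal_smul, charpoly_diagonal]
  simp

end IsHermitian

end Matrix

open Matrix

lemma entEta_mul (x y : ℝ) : entEta (x * y) = x * entEta y + y * entEta x := by
  unfold entEta
  rcases eq_or_ne x 0 with rfl | hx
  · simp
  rcases eq_or_ne y 0 with rfl | hy
  · simp
  rw [Real.log_mul hx hy]
  ring

section VonNeumannEntropy

variable {m n o : Type*} [Fintype m] [DecidableEq m] [Fintype n] [DecidableEq n]
  [Fintype o] [DecidableEq o]

lemma vnEntropy_eq_sum_roots_charpoly {A : Matrix n n ℂ} (hA : A.IsHermitian) :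
    vnEntropy A = ((A.charpoly.roots.map Complex.re).map entEta).sum := by
  rw [vnEntropy, dif_pos hA, hA.sum_comp_eigenvalues_eq_roots_charpoly]

lemma vnEntropy_submatrix_equiv (A : Matrix n n ℂ) (e : m ≃ n) :
    vnEntropy (A.submatrix e e) = vnEntropy A := by
  by_cases hA : A.IsHermitian
  · rw [vnEntropy_eq_sum_roots_charpoly hA, vnEntropy_eq_sum_roots_charpoly (hA.submatrix e),
      show A.submatrix e e = reindex e.symm e.symm A from rfl, charpoly_reindex]
  · rw [vnEntropy, vnEntropy, dif_neg hA, dif_neg (mt (isHermitian_submatrix_equiv e).mp hA)]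

lemma vnEntropy_blockDiagonal {A : o → Matrix n n ℂ} (hA : ∀ i, (A i).IsHermitian) :
    vnEntropy (blockDiagonal A) = ∑ i, vnEntropy (A i) := by
  rw [vnEntropy_eq_sum_roots_charpoly (isHermitian_blockDiagonal_iff.mpr hA),
    charpoly_blockDiagonal,
    roots_prod _ _ (Finset.prod_ne_zero_iff.mpr fun i _ => (charpoly_monic _).ne_zero)]
  simp [Multiset.map_bind, Multiset.sum_bind, vnEntropy_eq_sum_roots_charpoly (hA _)]

lemma vnEntropy_ofReal_smul {A : Matrix n n ℂ} (hA : A.IsHermitian) (t : ℝ) :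
    vnEntropy ((t : ℂ) • A) = entEta t * A.trace.re + t * vnEntropy A := by
  have htA : ((t : ℂ) • A).IsHermitian := hA.smul (Complex.conj_ofReal t)
  rw [vnEntropy, dif_pos htA, htA.sum_comp_eigenvalues_of_charpoly_eq (hA.charpoly_ofReal_smul t),
    vnEntropy, dif_pos hA, hA.trace_eq_sum_eigenvalues]
  simp only [entEta_mul, Finset.sum_add_distrib, mul_comm (entEta t), Finset.sum_mul,
    Finset.mul_sum, Complex.re_sum]
  exact add_comm _ _

lemma IsDensityMatrix.submatrix_equiv {ρ : Matrix n n ℂ} (hρ : IsDensityMatrix ρ) (e : m ≃ n) :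
    IsDensityMatrix (ρ.submatrix e e) :=
  ⟨hρ.1.submatrix e, hρ.2.1.submatrix e, (e.sum_comp fun j => ρ j j).trans hρ.2.2⟩

lemma isDensityMatrix_blockDiagonal_smul {p : o → ℝ} (hp0 : ∀ i, 0 ≤ p i)
    (hp1 : ∑ i, p i = 1) {σ : o → Matrix n n ℂ} (hσ : ∀ i, IsDensityMatrix (σ i)) :
    IsDensityMatrix (blockDiagonal fun i => (p i : ℂ) • σ i) := by
  have hpsd : (blockDiagonal fun i => (p i : ℂ) • σ i).PosSemidef :=
    PosSemidef.blockDiagonal fun i => (hσ i).2.1.smul (by exact_mod_cast hp0 i)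
  refine ⟨hpsd.isHermitian, hpsd, ?_⟩
  simp [trace_blockDiagonal, (hσ _).2.2, ← Complex.ofReal_sum, hp1]

end VonNeumannEntropy

/-- Joint entropy theorem: the entropy of a block-diagonal cq-state is
the Shannon entropy of the probability vector plus the average entropy of the blocks. -/
theorem joint_entropy_theorem {c n : ℕ}
    (p : Fin c → ℝ) (hp0 : ∀ i, 0 ≤ p i) (hp1 : ∑ i, p i = 1)
    (σ : Fin c → Matrix (Fin n) (Fin n) ℂ) (hσ : ∀ i, IsDensityMatrix (σ i))
    (Ω : Matrix (Fin c × Fin n) (Fin c × Fin n) ℂ)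
    (hΩ : ∀ x y : Fin c × Fin n,
      Ω x y = if x.1 = y.1 then (p x.1 : ℂ) * σ x.1 x.2 y.2 else 0) :
    IsDensityMatrix Ω ∧
      vnEntropy Ω = (∑ i, entEta (p i)) + ∑ i, p i * vnEntropy (σ i) := by
  have hΩ_block : Ω = (blockDiagonal fun i => (p i : ℂ) • σ i).submatrix
      (Equiv.prodComm _ _) (Equiv.prodComm _ _) := by
    ext x y
    simp [hΩ, blockDiagonal_apply]
  rw [hΩ_block]
  refine ⟨(isDensityMatrix_blockDiagonal_smul hp0 hp1 hσ).submatrix_equiv _, ?_⟩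
  rw [vnEntropy_submatrix_equiv,
    vnEntropy_blockDiagonal fun i => (hσ i).1.smul (Complex.conj_ofReal (p i)),
    ← Finset.sum_add_distrib]
  refine Finset.sum_congr rfl fun i _ => ?_
  rw [vnEntropy_ofReal_smul (hσ i).1, (hσ i).2.2]
  simp
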